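/- Let ν be strictly dominant and let T ⊆ U_1 be a set such that the valuations of the entries of the elements of T are bounded below, i.e. there is B ∈ ℤ with val(g_{pq}) ≥ B for every g ∈ T and all p < q. Then for every negative integer N < B one has T ⊆ U_N and f_ν⁻¹(T) ⊆ U_N. -/

import Mathlib

noncomputable section

open Matrix

/-- The ε-adic valuation on `L = k̄((ε))`, with `val 0 = ∞`. -/
def val {K : Type*} [Field K] (x : LaurentSeries K) : WithTop ℤ := x.orderTop

/-- The uniformizer ε of the Laurent series field. -/
def eps (K : Type*) [Field K] : LaurentSeries K := HahnSeries.single 1 1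

/-- `σ : L → L` is the Frobenius automorphism: it fixes ε and raises each Laurent-series
coefficient to the `q`-th power.  (This property determines `σ` uniquely.) -/
def IsFrobenius (K : Type*) [Field K] (q : ℕ)
    (σ : LaurentSeries K → LaurentSeries K) : Prop :=
  ∀ (x : LaurentSeries K) (n : ℤ), (σ x).coeff n = (x.coeff n) ^ q

/-- Upper unitriangular matrix: an element of `U_1`. -/
def Unitri {K : Type*} [Field K] {n : ℕ}
    (g : Matrix (Fin n) (Fin n) (LaurentSeries K)) : Prop :=
  (∀ i, g i i = 1) ∧ (∀ i j : Fin n, j < i → g i j = 0)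

/-- `ν = (ν_1, …, ν_n)` is strictly dominant: `ν_1 > ν_2 > … > ν_n`. -/
def StrictDominant {n : ℕ} (ν : Fin n → ℤ) : Prop :=
  ∀ p q : Fin n, p < q → ν q < ν p

/-- The diagonal matrix `ε^ν = diag(ε^{ν_1}, …, ε^{ν_n})`. -/
def epsDiag (K : Type*) [Field K] {n : ℕ} (ν : Fin n → ℤ) :
    Matrix (Fin n) (Fin n) (LaurentSeries K) :=
  Matrix.diagonal fun i => eps K ^ (ν i)

/-- The map `f_ν : U_1 → U_1`, `f_ν(h) = h⁻¹ · ε^ν · σ(h) · ε^{−ν}`. -/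
def fnu {K : Type*} [Field K] {n : ℕ} (σ : LaurentSeries K → LaurentSeries K)
    (ν : Fin n → ℤ) (g : Matrix (Fin n) (Fin n) (LaurentSeries K)) :
    Matrix (Fin n) (Fin n) (LaurentSeries K) :=
  g⁻¹ * epsDiag K ν * g.map σ * epsDiag K (fun i => -ν i)

/-- The subgroup `U(o_L)` of `U_1`: unitriangular matrices with entries in `o_L`. -/
def UO (K : Type*) [Field K] (n : ℕ) :
    Set (Matrix (Fin n) (Fin n) (LaurentSeries K)) :=
  {g | Unitri g ∧ ∀ p q : Fin n, 0 ≤ val (g p q)}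

/-- `U_N = {g ∈ U_1 : val(g_{pq}) ≥ (q−p)·N for all p < q}`
(equivalently `ε^{−μ}·U(o_L)·ε^{μ}` for `μ = (N, 2N, …, nN)`). -/
def UN (K : Type*) [Field K] (n : ℕ) (N : ℤ) :
    Set (Matrix (Fin n) (Fin n) (LaurentSeries K)) :=
  {g | Unitri g ∧ ∀ p q : Fin n, p < q →
    ((((q : ℤ) - (p : ℤ)) * N : ℤ) : WithTop ℤ) ≤ val (g p q)}

/-- `U_{m,N} = {g ∈ U_1 : val(g_{pq}) ≥ (q−p)·N + m for all p < q}`. -/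
def UmN (K : Type*) [Field K] (n : ℕ) (m N : ℤ) :
    Set (Matrix (Fin n) (Fin n) (LaurentSeries K)) :=
  {g | Unitri g ∧ ∀ p q : Fin n, p < q →
    ((((q : ℤ) - (p : ℤ)) * N + m : ℤ) : WithTop ℤ) ≤ val (g p q)}


/-! Since `(q - p) N ≤ N < B`, every element of `T` lies in `U_N`. For the preimage, put
`h = f_ν(g)`, so that `g h = ε^ν σ(g) ε^{-ν}`. Its `(p, q)` entry reads
`g_pq - ε^{ν_p - ν_q} σ(g_pq) = -∑_{p ≤ r < q} g_pr h_rq`, and by induction on `q` the right-hand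
side has valuation `≥ (q - p) N`. As `σ` preserves valuations and `ν_p > ν_q`, the two terms on the
left have distinct valuations unless `g_pq = 0`, so `val g_pq ≥ (q - p) N` as well. -/

section Valuation

variable {K : Type*} [Field K]

lemma val_mul (x y : LaurentSeries K) : val (x * y) = val x + val y :=
  HahnSeries.orderTop_mul x y

lemma val_eps_zpow (c : ℤ) : val (eps K ^ c) = c := by
  rw [val, eps, ← RatFunc.single_zpow, HahnSeries.orderTop_single one_ne_zero]

lemma le_val_sum {ι : Type*} {s : Finset ι} {f : ι → LaurentSeries K} {M : WithTop ℤ}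
    (h : ∀ i ∈ s, M ≤ val (f i)) : M ≤ val (∑ i ∈ s, f i) :=
  (HahnSeries.addVal ℤ K).map_le_sum h

lemma val_le_val_of_support_subset {x y : LaurentSeries K} (h : y.support ⊆ x.support) :
    val x ≤ val y := by
  rcases eq_or_ne y 0 with rfl | hy
  · simp [val]
  · obtain ⟨g, hg⟩ := WithTop.ne_top_iff_exists.mp (HahnSeries.orderTop_ne_top.mpr hy)
    rw [val, val, ← hg]
    exact HahnSeries.orderTop_le_of_coeff_ne_zero (h (HahnSeries.coeff_orderTop_ne hg.symm))

lemma IsFrobenius.val_apply {q : ℕ} (hq : q ≠ 0) {σ : LaurentSeries K → LaurentSeries K}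
    (hσ : IsFrobenius K q σ) (x : LaurentSeries K) : val (σ x) = val x := by
  have hsupp : (σ x).support = x.support := by
    ext n
    simp [HahnSeries.mem_support, hσ x n, pow_eq_zero_iff hq]
  exact le_antisymm (val_le_val_of_support_subset hsupp.ge)
    (val_le_val_of_support_subset hsupp.le)

lemma le_val_of_le_val_sub {c : ℤ} (hc : 0 < c) {x y : LaurentSeries K}
    (hy : val y = c + val x) {M : WithTop ℤ} (h : M ≤ val (x - y)) : M ≤ val x := by
  rcases eq_or_ne (val x) ⊤ with hx | hx
  · simp [hx]
  · obtain ⟨v, hv⟩ := WithTop.ne_top_iff_exists.mp hx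
    have hxy : val x < val y := by
      rw [hy, ← hv, ← WithTop.coe_add, WithTop.coe_lt_coe]
      omega
    rwa [val, HahnSeries.orderTop_sub hxy] at h

end Valuation

section Unitri

variable {K : Type*} [Field K] {n : ℕ}

lemma Unitri.det_eq_one {g : Matrix (Fin n) (Fin n) (LaurentSeries K)} (hg : Unitri g) :
    g.det = 1 := by
  rw [det_of_isUpperTriangular hg.2]
  simp [hg.1]

lemma Unitri.mul_fnu {g : Matrix (Fin n) (Fin n) (LaurentSeries K)} (hg : Unitri g)
    (σ : LaurentSeries K → LaurentSeries K) (ν : Fin n → ℤ) :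
    g * fnu σ ν g = epsDiag K ν * g.map σ * epsDiag K (fun i => -ν i) := by
  simp only [fnu, ← Matrix.mul_assoc]
  rw [mul_nonsing_inv _ (by simp [hg.det_eq_one]), Matrix.one_mul]

lemma epsDiag_mul_mul_epsDiag_neg_apply (ν : Fin n → ℤ)
    (A : Matrix (Fin n) (Fin n) (LaurentSeries K)) (p q : Fin n) :
    (epsDiag K ν * A * epsDiag K (fun i => -ν i)) p q = eps K ^ (ν p - ν q) * A p q := by
  have heps : eps K ≠ 0 := HahnSeries.single_ne_zero one_ne_zero
  simp only [epsDiag, mul_diagonal, diagonal_mul, zpow_sub₀ heps, _root_.zpow_neg, div_eq_mul_inv]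
  ring

lemma Unitri.mul_apply_of_le {g h : Matrix (Fin n) (Fin n) (LaurentSeries K)} (hg : Unitri g)
    (hh : Unitri h) {p q : Fin n} (hpq : p ≤ q) :
    (g * h) p q = (∑ r ∈ Finset.Ico p q, g p r * h r q) + g p q := by
  have hvanish : ∀ r ∉ Finset.Icc p q, g p r * h r q = 0 := by
    intro r hr
    rcases lt_or_gt_of_ne (fun hrp : r = p => hr (by simp [hrp, hpq])) with hrp | hpr
    · rw [hg.2 p r hrp, zero_mul]
    · have hqr : q < r := by
        by_contra! hrq
        exact hr (Finset.mem_Icc.mpr ⟨hpr.le, hrq⟩)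
      rw [hh.2 r q hqr, mul_zero]
  rw [mul_apply, ← Finset.sum_subset (Finset.subset_univ _) fun r _ hr => hvanish r hr,
    ← Finset.Ico_insert_right hpq, Finset.sum_insert (by simp), hh.1 q, mul_one, add_comm]

lemma UmN_zero (N : ℤ) : UmN K n 0 N = UN K n N := by
  simp only [UmN, UN, add_zero]

lemma mem_UN_of_le_val {N B : ℤ} (hN : N ≤ 0) (hNB : N ≤ B)
    {g : Matrix (Fin n) (Fin n) (LaurentSeries K)} (hg : Unitri g)
    (hB : ∀ p q : Fin n, p < q → (B : WithTop ℤ) ≤ val (g p q)) : g ∈ UN K n N := by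
  refine ⟨hg, fun p q hpq => le_trans (WithTop.coe_le_coe.mpr ?_) (hB p q hpq)⟩
  have hdist : (1 : ℤ) ≤ (q : ℤ) - (p : ℤ) := by
    have : (p : ℕ) < (q : ℕ) := hpq
    omega
  nlinarith

theorem mem_UmN_of_fnu_mem_UmN {σ : LaurentSeries K → LaurentSeries K}
    (hσ : ∀ x, val (σ x) = val x) {ν : Fin n → ℤ} (hν : StrictDominant ν) {m N : ℤ}
    (hm : 0 ≤ m) {g : Matrix (Fin n) (Fin n) (LaurentSeries K)} (hg : Unitri g)
    (hf : fnu σ ν g ∈ UmN K n m N) : g ∈ UmN K n m N := by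
  refine ⟨hg, fun p q hpq => ?_⟩
  set h := fnu σ ν g
  induction q using WellFoundedLT.induction with
  | _ q ih =>
    have hentry : (∑ r ∈ Finset.Ico p q, g p r * h r q) + g p q
        = eps K ^ (ν p - ν q) * σ (g p q) := by
      rw [← hg.mul_apply_of_le hf.1 hpq.le, hg.mul_fnu, epsDiag_mul_mul_epsDiag_neg_apply,
        map_apply]
    have hrow : ∀ r ∈ Finset.Ico p q, ((((r : ℤ) - p) * N : ℤ) : WithTop ℤ) ≤ val (g p r) := by
      intro r hr
      rcases (Finset.mem_Ico.mp hr).1.eq_or_lt with rfl | hpr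
      · simp [hg.1, val]
      · exact le_trans (WithTop.coe_le_coe.mpr (by omega)) (ih r (Finset.mem_Ico.mp hr).2 hpr)
    have hsum : ((((q : ℤ) - p) * N + m : ℤ) : WithTop ℤ)
        ≤ val (∑ r ∈ Finset.Ico p q, g p r * h r q) := by
      refine le_val_sum fun r hr => ?_
      rw [val_mul]
      convert add_le_add (hrow r hr) (hf.2 r q (Finset.mem_Ico.mp hr).2) using 1
      rw [← WithTop.coe_add]
      congr 1
      ring
    refine le_val_of_le_val_sub (sub_pos.mpr (hν p q hpq)) (y := eps K ^ (ν p - ν q) * σ (g p q))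
      (by rw [val_mul, val_eps_zpow, hσ]) ?_
    rwa [← hentry, sub_add_cancel_right, val, HahnSeries.orderTop_neg]

end Unitri

theorem T_and_preimage_subset_UN_general (F : Type*) [Field F] [Fintype F]
    (n : ℕ)
    (σ : LaurentSeries (AlgebraicClosure F) → LaurentSeries (AlgebraicClosure F))
    (hσ : IsFrobenius (AlgebraicClosure F) (Fintype.card F) σ)
    (ν : Fin n → ℤ) (hν : StrictDominant ν)
    (T : Set (Matrix (Fin n) (Fin n) (LaurentSeries (AlgebraicClosure F))))
    (hT : T ⊆ {g | Unitri g})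
    (B : ℤ)
    (hB : ∀ g ∈ T, ∀ p q : Fin n, p < q → (B : WithTop ℤ) ≤ val (g p q))
    (N : ℤ) (hN0 : N < 0) (hNB : N < B) :
    T ⊆ UN (AlgebraicClosure F) n N ∧
    (∀ g, Unitri g → fnu σ ν g ∈ T → g ∈ UN (AlgebraicClosure F) n N) := by
  have hT_UN : T ⊆ UN (AlgebraicClosure F) n N :=
    fun g hg => mem_UN_of_le_val hN0.le hNB.le (hT hg) (hB g hg)
  refine ⟨hT_UN, fun g hg hfg => ?_⟩
  rw [← UmN_zero] at hT_UN ⊢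
  exact mem_UmN_of_fnu_mem_UmN (hσ.val_apply Fintype.card_ne_zero) hν le_rfl hg (hT_UN hfg)

/-- if `ν` is strictly dominant and `T ⊆ U_1` has the valuations of the
entries of its elements bounded below by `B`, then for every negative integer `N < B`
one has `T ⊆ U_N` and `f_ν⁻¹(T) ⊆ U_N`. -/
theorem T_and_preimage_subset_UN (F : Type*) [Field F] [Fintype F]
    (n : ℕ) (hn : 2 ≤ n)
    (σ : LaurentSeries (AlgebraicClosure F) → LaurentSeries (AlgebraicClosure F))
    (hσ : IsFrobenius (AlgebraicClosure F) (Fintype.card F) σ)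
    (ν : Fin n → ℤ) (hν : StrictDominant ν)
    (T : Set (Matrix (Fin n) (Fin n) (LaurentSeries (AlgebraicClosure F))))
    (hT : T ⊆ {g | Unitri g})
    (B : ℤ)
    (hB : ∀ g ∈ T, ∀ p q : Fin n, p < q → (B : WithTop ℤ) ≤ val (g p q))
    (N : ℤ) (hN0 : N < 0) (hNB : N < B) :
    T ⊆ UN (AlgebraicClosure F) n N ∧
    (∀ g, Unitri g → fnu σ ν g ∈ T → g ∈ UN (AlgebraicClosure F) n N) :=
  T_and_preimage_subset_UN_general F n σ hσ ν hν T hT B hB N hN0 hNB
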